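/- arXiv:2411.05458 — 2 statements merged into one kernel-verified Lean document; each statement's English description precedes it below -/
import Mathlib

section
/- Let α = p₁p₂⋯pₙ be a semi-meander with p₁ ≠ n. Let j* be the least j ≥ 1 such that pⱼ₊₁⋯pₙp₁⋯pⱼ is a semi-meander. Then: j* = 1 if p₁ = 1 and n is even; j* = I(p₁+1, α) if p₁ and n have the same parity; and j* = I(p₁−1, α) if p₁ and n have different parities, where I(e, α) is the position of symbol e in α. -/
/-- 1-based position of symbol `e` in the string `p`. -/
def posOf (p : List ℕ) (e : ℕ) : ℕ := p.idxOf e + 1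

/-- `x` lies strictly between `a` and `b`. -/
def StrictlyBetween (a b x : ℕ) : Prop := min a b < x ∧ x < max a b

/-- Two same-side arcs with endpoint pairs `{a,b}` and `{c,d}` cross
if exactly one of `c`, `d` lies strictly between `a` and `b`. -/
def ArcsCross (a b c d : ℕ) : Prop :=
  Xor' (StrictlyBetween a b c) (StrictlyBetween a b d)

/-- A stamp folding of order `n`: a permutation of `1,…,n` (as a list, `p i` is
the stamp at position `i`) such that no two bottom arcs (joining the positions
of stamps `i` and `i+1` for odd `i`) cross, and no two top arcs (even `i`) cross. -/
def IsStampFolding (n : ℕ) (p : List ℕ) : Prop :=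
  p.Perm (List.range' 1 n) ∧
  ∀ i j : ℕ, 1 ≤ i → i < j → j + 1 ≤ n → i % 2 = j % 2 →
    ¬ ArcsCross (posOf p i) (posOf p (i + 1)) (posOf p j) (posOf p (j + 1))

/-- A semi-meander of order `n`: a stamp folding in which stamp `n` is visible
from above when `n` is even and from below when `n` is odd, i.e. no arc on the
relevant side strictly covers the position of stamp `n`. -/
def IsSemiMeander (n : ℕ) (p : List ℕ) : Prop :=
  IsStampFolding n p ∧
  ∀ i : ℕ, 1 ≤ i → i + 1 ≤ n → i % 2 = n % 2 →
    ¬ StrictlyBetween (posOf p i) (posOf p (i + 1)) (posOf p n)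

/-!
Rotating by `j` moves every position `x` to `x - j` or `x + n - j`, a cyclic shift, so it
preserves (non-)crossing of arcs with distinct endpoints; it can only make an arc cover the
position of stamp `n` if that arc straddles the cut between positions `j` and `j + 1`. Hence
the rotation by `j ≤ n` is a semi-meander iff no visible-side arc (one joining stamps `i`,
`i + 1` with `i ≡ n mod 2`) straddles the cut. The visible-side arcs are pairwise disjoint, so
at most one of them touches the head `p₁`. If none does, `j* = 1`; this is the case `p₁ = 1`
with `n` even. Otherwise that arc joins position `1` to the position `q` of `p₁ ± 1`: it
straddles every cut `j < q`, while no other visible-side arc straddles the cut at `q`, because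
it must lie entirely inside or entirely outside the arc `{1, q}`.
-/

/-- The position that `x ∈ [1, n]` moves to under the right rotation by `j ≤ n`. -/
def rotatePos (n j x : ℕ) : ℕ := if j < x then x - j else x + n - j

theorem arcsCross_iff {a b c d : ℕ} :
    ArcsCross a b c d ↔ ¬ (StrictlyBetween a b c ↔ StrictlyBetween a b d) :=
  xor_iff_not_iff _ _

theorem not_arcsCross_rotatePos {n j a b c d : ℕ} (hj : j ≤ n)
    (ha : a ∈ Set.Icc 1 n) (hb : b ∈ Set.Icc 1 n) (hc : c ∈ Set.Icc 1 n) (hd : d ∈ Set.Icc 1 n)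
    (hac : a ≠ c) (had : a ≠ d) (hbc : b ≠ c) (hbd : b ≠ d) (h : ¬ ArcsCross a b c d) :
    ¬ ArcsCross (rotatePos n j a) (rotatePos n j b) (rotatePos n j c) (rotatePos n j d) := by
  simp only [Set.mem_Icc] at ha hb hc hd
  rw [arcsCross_iff] at *
  unfold StrictlyBetween rotatePos at *
  split_ifs <;> omega

theorem strictlyBetween_rotatePos_iff {n j a b x : ℕ}
    (ha : a ∈ Set.Icc 1 n) (hb : b ∈ Set.Icc 1 n) (hx : x ∈ Set.Icc 1 n)
    (hax : a ≠ x) (hbx : b ≠ x) (h : ¬ StrictlyBetween a b x) :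
    StrictlyBetween (rotatePos n j a) (rotatePos n j b) (rotatePos n j x) ↔
      ¬ (a ≤ j ↔ b ≤ j) := by
  simp only [Set.mem_Icc] at ha hb hx
  unfold StrictlyBetween rotatePos at *
  split_ifs <;> omega

theorem one_le_posOf (l : List ℕ) (e : ℕ) : 1 ≤ posOf l e :=
  Nat.succ_pos _

theorem posOf_eq_one_of_head?_eq_some {l : List ℕ} {e : ℕ} (h : l.head? = some e) :
    posOf l e = 1 := by
  obtain ⟨t, rfl⟩ := List.head?_eq_some_iff.1 h
  simp [posOf]

theorem List.Nodup.posOf_rotate {l : List ℕ} (hl : l.Nodup) {e : ℕ} (he : e ∈ l) {j : ℕ}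
    (hj : j ≤ l.length) : posOf (l.rotate j) e = rotatePos l.length j (posOf l e) := by
  have hi : l.idxOf e < l.length := List.idxOf_lt_length_iff.2 he
  set k := rotatePos l.length j (posOf l e) - 1 with hk
  have hkj : (k + j) % l.length = l.idxOf e := by
    unfold rotatePos posOf at hk
    split_ifs at hk
    · rw [show k + j = l.idxOf e by omega, Nat.mod_eq_of_lt hi]
    · rw [show k + j = l.idxOf e + l.length by omega, Nat.add_mod_right, Nat.mod_eq_of_lt hi]
  have hklt : k < (l.rotate j).length := by
    rw [List.length_rotate]; unfold rotatePos posOf at hk; split_ifs at hk <;> omega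
  have hget : (l.rotate j)[k] = e := by
    rw [List.getElem_rotate]; simp only [hkj, List.getElem_idxOf]
  have hidx := (List.nodup_rotate.2 hl).idxOf_getElem k hklt
  rw [hget] at hidx
  unfold posOf rotatePos at hk ⊢
  split_ifs at hk ⊢ <;> omega

section

variable {n : ℕ} {p : List ℕ}

theorem mem_iff_of_perm_range' (hp : p.Perm (List.range' 1 n)) {e : ℕ} :
    e ∈ p ↔ e ∈ Set.Icc 1 n := by
  rw [hp.mem_iff, List.mem_range'_1, Set.mem_Icc]; omega

theorem posOf_mem_Icc (hp : p.Perm (List.range' 1 n)) {e : ℕ} (he : e ∈ Set.Icc 1 n) :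
    posOf p e ∈ Set.Icc 1 n := by
  have hlt := List.idxOf_lt_length_iff.2 ((mem_iff_of_perm_range' hp).2 he)
  rw [hp.length_eq, List.length_range'] at hlt
  exact ⟨one_le_posOf p e, hlt⟩

theorem posOf_injOn (hp : p.Perm (List.range' 1 n)) : Set.InjOn (posOf p) (Set.Icc 1 n) :=
  fun _ ha _ _ hab =>
    (List.idxOf_inj ((mem_iff_of_perm_range' hp).2 ha)).1 (Nat.succ_injective hab)

theorem posOf_rotate_of_perm_range' (hp : p.Perm (List.range' 1 n)) {e j : ℕ}
    (he : e ∈ Set.Icc 1 n) (hj : j ≤ n) :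
    posOf (p.rotate j) e = rotatePos n j (posOf p e) := by
  have hlen : p.length = n := hp.length_eq.trans List.length_range'
  rw [(hp.nodup_iff.2 List.nodup_range').posOf_rotate ((mem_iff_of_perm_range' hp).2 he)
    (hlen ▸ hj), hlen]

theorem IsStampFolding.rotate (h : IsStampFolding n p) (j : ℕ) :
    IsStampFolding n (p.rotate j) := by
  have hp := h.1
  refine ⟨(List.rotate_perm p j).trans hp, fun i k hi hik hkn hpar => ?_⟩
  have hj : j % n ≤ n := (Nat.mod_lt _ (by omega)).le
  have hpos : ∀ e ∈ Set.Icc 1 n, posOf (p.rotate j) e = rotatePos n (j % n) (posOf p e) :=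
    fun e he => by
      rw [← List.rotate_mod, hp.length_eq, List.length_range',
        posOf_rotate_of_perm_range' hp he hj]
  have hi' : i ∈ Set.Icc 1 n := ⟨hi, by omega⟩
  have hi1 : i + 1 ∈ Set.Icc 1 n := ⟨by omega, by omega⟩
  have hk' : k ∈ Set.Icc 1 n := ⟨by omega, by omega⟩
  have hk1 : k + 1 ∈ Set.Icc 1 n := ⟨by omega, hkn⟩
  have hinj := posOf_injOn hp
  rw [hpos i hi', hpos (i + 1) hi1, hpos k hk', hpos (k + 1) hk1]
  exact not_arcsCross_rotatePos hj (posOf_mem_Icc hp hi') (posOf_mem_Icc hp hi1)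
    (posOf_mem_Icc hp hk') (posOf_mem_Icc hp hk1) (hinj.ne hi' hk' (by omega))
    (hinj.ne hi' hk1 (by omega)) (hinj.ne hi1 hk' (by omega)) (hinj.ne hi1 hk1 (by omega))
    (h.2 i k hi hik hkn hpar)

theorem IsSemiMeander.rotate_iff (h : IsSemiMeander n p) {j : ℕ} (hj : j ≤ n) :
    IsSemiMeander n (p.rotate j) ↔ ∀ i, 1 ≤ i → i + 1 ≤ n → i % 2 = n % 2 →
      (posOf p i ≤ j ↔ posOf p (i + 1) ≤ j) := by
  have hp := h.1.1
  have hinj := posOf_injOn hp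
  simp only [IsSemiMeander, h.1.rotate j, true_and]
  refine forall_congr' fun i => forall₃_congr fun hi hin hpar => ?_
  have hi' : i ∈ Set.Icc 1 n := ⟨hi, by omega⟩
  have hi1 : i + 1 ∈ Set.Icc 1 n := ⟨by omega, hin⟩
  have hn : n ∈ Set.Icc 1 n := ⟨by omega, le_rfl⟩
  rw [posOf_rotate_of_perm_range' hp hi' hj, posOf_rotate_of_perm_range' hp hi1 hj,
    posOf_rotate_of_perm_range' hp hn hj,
    strictlyBetween_rotatePos_iff (posOf_mem_Icc hp hi') (posOf_mem_Icc hp hi1)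
      (posOf_mem_Icc hp hn) (hinj.ne hi' hn (by omega)) (hinj.ne hi1 hn (by omega))
      (h.2 i hi hin hpar), not_not]

theorem IsSemiMeander.isLeast_rotate_of_head_not_on_visible_arc (h : IsSemiMeander n p)
    {e : ℕ} (hhead : p.head? = some e)
    (hfree : ∀ i, 1 ≤ i → i + 1 ≤ n → i % 2 = n % 2 → i ≠ e ∧ i + 1 ≠ e) :
    IsLeast {j | 1 ≤ j ∧ IsSemiMeander n (p.rotate j)} 1 := by
  have hp := h.1.1
  have he : e ∈ Set.Icc 1 n := (mem_iff_of_perm_range' hp).1 (List.mem_of_mem_head? hhead)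
  have hpos := posOf_eq_one_of_head?_eq_some hhead
  refine ⟨⟨le_rfl, (h.rotate_iff (he.1.trans he.2)).2 fun i hi hin hpar => ?_⟩, fun j hj => hj.1⟩
  have hinj := posOf_injOn hp
  have hie := hinj.ne (x := i) ⟨hi, by omega⟩ he (hfree i hi hin hpar).1
  have hi1e := hinj.ne (x := i + 1) ⟨by omega, hin⟩ he (hfree i hi hin hpar).2
  have := one_le_posOf p i
  have := one_le_posOf p (i + 1)
  omega

theorem IsSemiMeander.isLeast_rotate_of_visible_arc_at_head (h : IsSemiMeander n p) {c : ℕ}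
    (hc : 1 ≤ c) (hcn : c + 1 ≤ n) (hpar : c % 2 = n % 2)
    (hhead : min (posOf p c) (posOf p (c + 1)) = 1) :
    IsLeast {j | 1 ≤ j ∧ IsSemiMeander n (p.rotate j)} (max (posOf p c) (posOf p (c + 1))) := by
  have hp := h.1.1
  have hinj := posOf_injOn hp
  have hc' : c ∈ Set.Icc 1 n := ⟨hc, by omega⟩
  have hc1 : c + 1 ∈ Set.Icc 1 n := ⟨by omega, hcn⟩
  have hcc1 := hinj.ne hc' hc1 (by omega)
  have hmax := (posOf_mem_Icc hp hc').2
  have hmax1 := (posOf_mem_Icc hp hc1).2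
  refine ⟨⟨by omega, (h.rotate_iff (by omega)).2 fun i hi hin hipar => ?_⟩,
    fun j ⟨hj, hrot⟩ => ?_⟩
  · rcases eq_or_ne i c with rfl | hic
    · omega
    have hi' : i ∈ Set.Icc 1 n := ⟨hi, by omega⟩
    have hi1 : i + 1 ∈ Set.Icc 1 n := ⟨by omega, hin⟩
    have := hinj.ne hi' hc' hic
    have := hinj.ne hi' hc1 (by omega)
    have := hinj.ne hi1 hc' (by omega)
    have := hinj.ne hi1 hc1 (by omega)
    have := one_le_posOf p i
    have := one_le_posOf p (i + 1)
    have hnc : ¬ ArcsCross (posOf p i) (posOf p (i + 1)) (posOf p c) (posOf p (c + 1)) ∨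
        ¬ ArcsCross (posOf p c) (posOf p (c + 1)) (posOf p i) (posOf p (i + 1)) := by
      rcases hic.lt_or_gt with hlt | hlt
      · exact .inl (h.1.2 i c hi hlt hcn (by omega))
      · exact .inr (h.1.2 c i hc hlt hin (by omega))
    simp only [arcsCross_iff, StrictlyBetween] at hnc
    omega
  · by_contra! hlt
    have := (h.rotate_iff (by omega)).1 hrot c hc hcn hpar
    omega

end

/-- Lemma on right rotations: let `α = p₁⋯pₙ` be a semi-meander with `p₁ ≠ n` and let
`j*` be the least `j ≥ 1` such that the right rotation by `j` (moving the prefix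
`p₁⋯pⱼ` to the end) is a semi-meander. Then `j* = 1` if `p₁ = 1` and `n` is even;
otherwise `j* = I(p₁+1, α)` if `p₁` and `n` have the same parity, and
`j* = I(p₁-1, α)` if they have different parities. -/
theorem semi_meander_next_right_rotation (n : ℕ) (p : List ℕ) (h : IsSemiMeander n p)
    (h1 : ℕ) (hhead : p.head? = some h1) (hne : h1 ≠ n) (jstar : ℕ)
    (hleast : IsLeast {j : ℕ | 1 ≤ j ∧ IsSemiMeander n (p.rotate j)} jstar) :
    (h1 = 1 ∧ Even n → jstar = 1) ∧
    (¬ (h1 = 1 ∧ Even n) →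
      (h1 % 2 = n % 2 → jstar = posOf p (h1 + 1)) ∧
      (h1 % 2 ≠ n % 2 → jstar = posOf p (h1 - 1))) := by
  obtain ⟨hh1, hh1n⟩ := (mem_iff_of_perm_range' h.1.1).1 (List.mem_of_mem_head? hhead)
  have hpos := posOf_eq_one_of_head?_eq_some hhead
  rw [Nat.even_iff]
  refine ⟨fun ⟨h11, heven⟩ => ?_, fun hnot => ⟨fun hpar => ?_, fun hpar => ?_⟩⟩
  · exact hleast.unique (h.isLeast_rotate_of_head_not_on_visible_arc hhead
      fun i hi _ hpar => ⟨by omega, by omega⟩)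
  · have hvis := h.isLeast_rotate_of_visible_arc_at_head hh1 (by omega) hpar
      (by simp [hpos, one_le_posOf])
    rw [hpos, max_eq_right (one_le_posOf p _)] at hvis
    exact hleast.unique hvis
  · obtain ⟨c, rfl⟩ : ∃ c, h1 = c + 1 := ⟨h1 - 1, by omega⟩
    have hvis := h.isLeast_rotate_of_visible_arc_at_head (c := c)
      (by omega) (by omega) (by omega) (by simp [hpos, one_le_posOf])
    rw [hpos, max_eq_left (one_le_posOf p _)] at hvis
    rw [Nat.add_sub_cancel]
    exact hleast.unique hvis
end

section
/- Let α = p₁p₂⋯pₙ be a semi-meander of order n (n ≥ 2) with p₁ and n of the same parity and p₁ ≠ n, p₁ ≠ 1 or n odd. Then for every j with 1 ≤ j < I(p₁+1, α), the rotation pⱼ₊₁⋯pₙp₁⋯pⱼ is not a semi-meander. -/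
/-! In `α` the arc joining `p₁` (position `1`) and `p₁ + 1` lies on the side from which stamp `n`
is visible, so it cannot cover `n`; as `n` is neither endpoint, `n` sits to the right of `p₁ + 1`.
Rotating by `j ≤ I(p₁ + 1, α) - 1` sends `p₁` to the far right while `p₁ + 1` and `n` keep their
relative order, so the same arc now covers `n`. -/

namespace List.Nodup

variable {α : Type*} [BEq α] [LawfulBEq α] {l : List α} {x : α} {j : ℕ}

theorem idxOf_rotate_eq (hl : l.Nodup) {k : ℕ} (hk : k < l.length)
    (hkj : (k + j) % l.length = l.idxOf x) (hx : x ∈ l) : (l.rotate j).idxOf x = k := by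
  have hk' : k < (l.rotate j).length := by rwa [length_rotate]
  have hget : (l.rotate j)[k] = x := by
    simp only [getElem_rotate, hkj, getElem_idxOf (idxOf_lt_length_iff.mpr hx)]
  rw [← hget]
  exact ((rotate_perm l j).symm.nodup hl).idxOf_getElem k hk'

theorem idxOf_rotate_of_le (hl : l.Nodup) (hx : x ∈ l) (hj : j ≤ l.idxOf x) :
    (l.rotate j).idxOf x = l.idxOf x - j := by
  have hxl := idxOf_lt_length_iff.mpr hx
  exact hl.idxOf_rotate_eq (by omega) (by rw [Nat.sub_add_cancel hj, Nat.mod_eq_of_lt hxl]) hx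

theorem idxOf_rotate_of_lt (hl : l.Nodup) (hxj : l.idxOf x < j) (hj : j ≤ l.length) :
    (l.rotate j).idxOf x = l.length - j + l.idxOf x := by
  have hx : x ∈ l := idxOf_lt_length_iff.mp (by omega)
  refine hl.idxOf_rotate_eq (by omega) ?_ hx
  rw [show l.length - j + l.idxOf x + j = l.idxOf x + l.length by omega, Nat.add_mod_right,
    Nat.mod_eq_of_lt (by omega)]

end List.Nodup

theorem strictlyBetween_posOf_rotate {l : List ℕ} (hl : l.Nodup) {a b c j : ℕ}
    (ha : l.head? = some a) (hb : b ∈ l) (hc : c ∈ l) (hj : 0 < j) (hjb : j ≤ l.idxOf b)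
    (hbc : l.idxOf b < l.idxOf c) :
    StrictlyBetween (posOf (l.rotate j) a) (posOf (l.rotate j) b) (posOf (l.rotate j) c) := by
  have ha0 : l.idxOf a = 0 := (List.idxOf_eq_zero_iff_eq_nil_or_head_eq a).mpr (.inr ha)
  have hcl : l.idxOf c < l.length := List.idxOf_lt_length_iff.mpr hc
  have hra := hl.idxOf_rotate_of_lt (x := a) (j := j) (by omega) (by omega)
  have hrc := hl.idxOf_rotate_of_le hc (hjb.trans hbc.le)
  simp only [StrictlyBetween, posOf, hra, ha0, hl.idxOf_rotate_of_le hb hjb, hrc]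
  omega

namespace IsStampFolding

variable {n : ℕ} {p : List ℕ}

theorem nodup (h : IsStampFolding n p) : p.Nodup :=
  h.1.nodup_iff.mpr List.nodup_range'

theorem mem_iff (h : IsStampFolding n p) {e : ℕ} : e ∈ p ↔ 1 ≤ e ∧ e ≤ n := by
  rw [h.1.mem_iff, List.mem_range'_1]
  omega

end IsStampFolding

theorem IsSemiMeander.idxOf_succ_head_lt_idxOf {n : ℕ} {p : List ℕ} (h : IsSemiMeander n p)
    {a : ℕ} (ha : p.head? = some a) (hpar : a % 2 = n % 2) (hne : a ≠ n) :
    p.idxOf (a + 1) < p.idxOf n := by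
  have hab := h.1.mem_iff.mp (List.mem_of_mem_head? ha)
  have hn : n ∈ p := h.1.mem_iff.mpr ⟨by omega, le_rfl⟩
  have hvis := h.2 a hab.1 (by omega) hpar
  have hne1 : p.idxOf (a + 1) ≠ p.idxOf n :=
    fun e => by have := List.idxOf_inj (l := p) hn |>.mp e.symm; omega
  have ha0 : p.idxOf a = 0 := (List.idxOf_eq_zero_iff_eq_nil_or_head_eq a).mpr (.inr ha)
  have hn0 : p.idxOf n ≠ 0 := fun e => by
    rcases (List.idxOf_eq_zero_iff_eq_nil_or_head_eq n).mp e with rfl | hn'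
    · simp at ha
    · exact hne (Option.some.inj (ha.symm.trans hn'))
  simp only [StrictlyBetween, posOf, ha0] at hvis
  omega

theorem semi_meander_rotation_minimality_general (n : ℕ) (p : List ℕ)
    (h : IsSemiMeander n p) (h1 : ℕ) (hhead : p.head? = some h1)
    (hpar : h1 % 2 = n % 2) (hne : h1 ≠ n)
    (j : ℕ) (hj1 : 1 ≤ j) (hj2 : j < posOf p (h1 + 1)) :
    ¬ IsSemiMeander n (p.rotate j) := by
  intro hrot
  have hh1 := h.1.mem_iff.mp (List.mem_of_mem_head? hhead)
  have hsucc : h1 + 1 ∈ p := h.1.mem_iff.mpr ⟨by omega, by omega⟩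
  have hn : n ∈ p := h.1.mem_iff.mpr ⟨by omega, le_rfl⟩
  have hcover := strictlyBetween_posOf_rotate h.1.nodup hhead hsucc hn hj1
    (Nat.lt_succ_iff.mp hj2) (h.idxOf_succ_head_lt_idxOf hhead hpar hne)
  exact hrot.2 h1 hh1.1 (by omega) hpar hcover

/-- Minimality half of the rotation-step lemma: let `α = p₁⋯pₙ` be a semi-meander of
order `n ≥ 2` with `p₁` and `n` of the same parity, `p₁ ≠ n`, and not (`p₁ = 1` and
`n` even). Then for every `j` with `1 ≤ j < I(p₁ + 1, α)`, the rotation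
`pⱼ₊₁⋯pₙp₁⋯pⱼ` is not a semi-meander. -/
theorem semi_meander_rotation_minimality (n : ℕ) (hn : 2 ≤ n) (p : List ℕ)
    (h : IsSemiMeander n p) (h1 : ℕ) (hhead : p.head? = some h1)
    (hpar : h1 % 2 = n % 2) (hne : h1 ≠ n) (hnot : h1 ≠ 1 ∨ Odd n)
    (j : ℕ) (hj1 : 1 ≤ j) (hj2 : j < posOf p (h1 + 1)) :
    ¬ IsSemiMeander n (p.rotate j) :=
  semi_meander_rotation_minimality_general n p h h1 hhead hpar hne j hj1 hj2
end
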